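/- arXiv:math/0005204 — 2 statements merged into one kernel-verified Lean document; each statement's English description precedes it below -/
import Mathlib

section
/- The polynomial f(x) = (x² − 2)(x² − 7)(x² − 14) ∈ ℤ[x] has no rational root, and yet for every prime p there exists x ∈ ℤ/pℤ such that the reduction of f modulo p vanishes at x. -/
open Polynomial

private lemma aux_not_square (n : ℕ) (h : ∀ r < n + 1, r * r ≠ n) : ¬ IsSquare n := by
  rintro ⟨r, hr⟩
  exact h r (by nlinarith) hr.symm

private lemma aux_mul_square {F : Type*} [Field F] [Fintype F] [DecidableEq F]
    {a b : F} (ha : a ≠ 0) (hna : ¬IsSquare a) (hnb : ¬IsSquare b) : IsSquare (a * b) := by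
  have hb : b ≠ 0 := by rintro rfl; exact hnb (by simp)
  have h1 : quadraticChar F a = -1 := quadraticChar_neg_one_iff_not_isSquare.mpr hna
  have h2 : quadraticChar F b = -1 := quadraticChar_neg_one_iff_not_isSquare.mpr hnb
  have : quadraticChar F (a * b) = 1 := by rw [map_mul, h1, h2]; ring
  exact (quadraticChar_one_iff_isSquare (mul_ne_zero ha hb)).mp this

theorem stmt7 (f : Polynomial ℤ)
    (hf : f = (Polynomial.X ^ 2 - Polynomial.C 2) * (Polynomial.X ^ 2 - Polynomial.C 7) *
      (Polynomial.X ^ 2 - Polynomial.C 14)) :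
    (¬ ∃ q : ℚ, Polynomial.aeval q f = 0) ∧
      ∀ p : ℕ, p.Prime →
        ∃ x : ZMod p, Polynomial.eval x (f.map (Int.castRingHom (ZMod p))) = 0 := by
  subst hf
  constructor
  · rintro ⟨q, hq⟩
    simp only [map_mul, map_sub, map_pow, aeval_X, aeval_C, mul_eq_zero, sub_eq_zero] at hq
    have sq : ∀ n : ℕ, (q : ℚ) ^ 2 = ((n : ℤ) : ℚ) → IsSquare n := by
      intro n h
      rw [show ((n:ℤ):ℚ) = (n : ℚ) by push_cast; ring] at h
      exact Rat.isSquare_natCast_iff.mp ⟨q, by rw [← h]; ring⟩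
    rcases hq with (h | h) | h
    · exact aux_not_square 2 (by decide) (sq 2 (by exact_mod_cast h))
    · exact aux_not_square 7 (by decide) (sq 7 (by exact_mod_cast h))
    · exact aux_not_square 14 (by decide) (sq 14 (by exact_mod_cast h))
  · intro p hp
    have key : ∃ x : ZMod p, x ^ 2 = 2 ∨ x ^ 2 = 7 ∨ x ^ 2 = 14 := by
      haveI : Fact p.Prime := ⟨hp⟩
      rcases eq_or_ne p 2 with rfl | hp2
      · refine ⟨0, Or.inl ?_⟩
        have h2 : ((2:ℕ) : ZMod 2) = 0 := ZMod.natCast_self 2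
        push_cast at h2
        rw [h2]; ring
      rcases eq_or_ne p 7 with rfl | hp7
      · refine ⟨0, Or.inr (Or.inl ?_)⟩
        have h7 : ((7:ℕ) : ZMod 7) = 0 := ZMod.natCast_self 7
        push_cast at h7
        rw [h7]; ring
      haveI : DecidableEq (ZMod p) := inferInstance
      by_cases h2 : IsSquare (2 : ZMod p)
      · obtain ⟨r, hr⟩ := h2; exact ⟨r, Or.inl (by rw [hr]; ring)⟩
      by_cases h7 : IsSquare (7 : ZMod p)
      · obtain ⟨r, hr⟩ := h7; exact ⟨r, Or.inr (Or.inl (by rw [hr]; ring))⟩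
      · have ha : (2 : ZMod p) ≠ 0 := by
          intro h
          have h' : ((2 : ℕ) : ZMod p) = 0 := by exact_mod_cast h
          have hd : p ∣ 2 := (ZMod.natCast_eq_zero_iff 2 p).mp h'
          have := Nat.le_of_dvd (by norm_num) hd
          interval_cases p <;> simp_all
        have := aux_mul_square ha h2 h7
        rw [show (2 : ZMod p) * 7 = 14 by norm_num] at this
        obtain ⟨r, hr⟩ := this
        exact ⟨r, Or.inr (Or.inr (by rw [hr]; ring))⟩
    obtain ⟨x, hx⟩ := key
    refine ⟨x, ?_⟩
    simp only [Polynomial.map_mul, Polynomial.map_sub, Polynomial.map_pow, map_X, map_C,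
      eval_mul, eval_sub, eval_pow, eval_X, eval_C]
    rcases hx with h | h | h <;> rw [h] <;> norm_num
end

section
/- For every integer n ≥ 1, (n+1)ⁿ/n! ≤ e^{1/8}·eⁿ/√(n+1). -/
/-!
Stirling's lower bound `√(2πm) (m/e)^m ≤ m!` at `m = n + 1` gives
`(n+1)^n / n! ≤ e^(n+1) / (√(2π) √(n+1))`, and `e / √(2π) ≤ e^(1/8)` because `e^7 < (2π)^4`.
-/

open Real Nat

lemma succ_pow_mul_sqrt_succ_mul_sqrt_two_pi_le (n : ℕ) :
    ((n : ℝ) + 1) ^ n * √((n : ℝ) + 1) * √(2 * π) ≤ n ! * exp 1 ^ (n + 1) := by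
  have hpos : (0 : ℝ) < (n : ℝ) + 1 := by positivity
  refine le_of_mul_le_mul_left ?_ hpos
  calc ((n : ℝ) + 1) * (((n : ℝ) + 1) ^ n * √((n : ℝ) + 1) * √(2 * π))
      = √(2 * π * ((n + 1 : ℕ) : ℝ)) * (((n + 1 : ℕ) : ℝ) / exp 1) ^ (n + 1) *
          exp 1 ^ (n + 1) := by
        push_cast
        rw [div_pow, sqrt_mul (by positivity : (0 : ℝ) ≤ 2 * π)]
        field_simp
        ring
    _ ≤ (n + 1)! * exp 1 ^ (n + 1) := by gcongr; exact Stirling.le_factorial_stirling (n + 1)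
    _ = ((n : ℝ) + 1) * (n ! * exp 1 ^ (n + 1)) := by push_cast [factorial_succ]; ring

lemma exp_one_le_exp_one_div_eight_mul_sqrt_two_pi : exp 1 ≤ exp (1 / 8) * √(2 * π) := by
  have h78 : exp (7 / 8) ≤ √(2 * π) := by
    refine (pow_le_pow_iff_left₀ (exp_pos _).le (sqrt_nonneg _) (n := 8) (by norm_num)).mp ?_
    calc exp (7 / 8) ^ 8 = exp 1 ^ 7 := by rw [← exp_nat_mul, exp_one_pow]; norm_num
      _ ≤ 2.7182818286 ^ 7 := by gcongr; exact exp_one_lt_d9.le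
      _ ≤ (2 * 3.14) ^ 4 := by norm_num
      _ ≤ (2 * π) ^ 4 := by gcongr; exact pi_gt_d2.le
      _ = √(2 * π) ^ 8 := by rw [show 8 = 2 * 4 from rfl, pow_mul, sq_sqrt (by positivity)]
  calc exp 1 = exp (1 / 8) * exp (7 / 8) := by rw [← exp_add]; norm_num
    _ ≤ exp (1 / 8) * √(2 * π) := by gcongr

theorem stmt14_general (n : ℕ) :
    ((n : ℝ) + 1) ^ n / (n.factorial : ℝ) ≤
      Real.exp (1 / 8) * Real.exp 1 ^ n / Real.sqrt ((n : ℝ) + 1) := by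
  rw [div_le_div_iff₀ (by positivity) (by positivity)]
  refine le_of_mul_le_mul_right ?_ (by positivity : 0 < √(2 * π))
  calc ((n : ℝ) + 1) ^ n * √((n : ℝ) + 1) * √(2 * π) ≤ n ! * exp 1 ^ n * exp 1 := by
        rw [mul_assoc (n ! : ℝ), ← pow_succ]
        exact succ_pow_mul_sqrt_succ_mul_sqrt_two_pi_le n
    _ ≤ n ! * exp 1 ^ n * (exp (1 / 8) * √(2 * π)) := by
        gcongr; exact exp_one_le_exp_one_div_eight_mul_sqrt_two_pi
    _ = exp (1 / 8) * exp 1 ^ n * n ! * √(2 * π) := by ring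

theorem stmt14 (n : ℕ) (hn : 1 ≤ n) :
    ((n : ℝ) + 1) ^ n / (n.factorial : ℝ) ≤
      Real.exp (1 / 8) * Real.exp 1 ^ n / Real.sqrt ((n : ℝ) + 1) :=
  stmt14_general n
end
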